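/- Let B₁, …, B_m ∈ ℝ^{q×r} with m ≥ 2, B̄ := (1/m) Σ_k B_k, and Σ_B := (1/m) Σ_{k=1}^m (B_k − B̄)ᵀ(B_k − B̄) ∈ ℝ^{r×r}. Suppose there are constants 0 < κ₀ ≤ κ₁ < ∞ with κ₀ ≤ λ_r(Σ_B) and λ₁(Σ_B) ≤ κ₁, where λ₁ ≥ ⋯ ≥ λ_r are the ordered eigenvalues. Let A ∈ ℝ^{r×p} satisfy A Aᵀ = I_r, and let L be the matrix obtained by vertically stacking the blocks (B_j − B_k)A ∈ ℝ^{q×p} over all pairs 1 ≤ j < k ≤ m. Then Lᵀ L has rank r, its r nonzero eigenvalues lie in the interval [κ₀ m², κ₁ m²] (equivalently, the r-th largest singular value of L satisfies σ_r(L)² ≥ κ₀ m² and ‖L‖_op² ≤ κ₁ m²), and ‖L‖_F² ≤ r κ₁ m². -/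

import Mathlib

open Matrix

/-- The set of unordered pairs `{(j,k) : j < k}` from `Fin m`. -/
abbrev PairIdx (m : ℕ) := {g : Fin m × Fin m // g.1 < g.2}

/-- The empirical covariance `Σ_B := (1/m) Σ_k (B_k − B̄)ᵀ(B_k − B̄)`. -/
noncomputable def SigmaB {q r m : ℕ} (B : Fin m → Matrix (Fin q) (Fin r) ℝ) :
    Matrix (Fin r) (Fin r) ℝ :=
  (m : ℝ)⁻¹ • ∑ k, ((B k - (m : ℝ)⁻¹ • ∑ l, B l)ᵀ * (B k - (m : ℝ)⁻¹ • ∑ l, B l))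

/-- The stacked pairwise-contrast matrix with blocks `(B_j − B_k)A`, `j < k`. -/
def stackedL {q r p m : ℕ} (B : Fin m → Matrix (Fin q) (Fin r) ℝ)
    (A : Matrix (Fin r) (Fin p) ℝ) : Matrix (PairIdx m × Fin q) (Fin p) ℝ :=
  fun gi j => ((B gi.1.1.1 - B gi.1.1.2) * A) gi.2 j

lemma psd_smul {n : Type*} [Fintype n] {X : Matrix n n ℝ} (hX : X.PosSemidef)
    {c : ℝ} (hc : 0 ≤ c) : (c • X).PosSemidef := by
  refine PosSemidef.of_dotProduct_mulVec_nonneg ?_ fun x => ?_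
  · show (c • X)ᴴ = c • X
    rw [conjTranspose_smul, hX.1]
    norm_num
  · rw [smul_mulVec, dotProduct_smul, smul_eq_mul]
    exact mul_nonneg hc (hX.dotProduct_mulVec_nonneg x)

lemma psd_trace_nonneg {n : Type*} [Fintype n] [DecidableEq n] {X : Matrix n n ℝ}
    (hX : X.PosSemidef) : 0 ≤ X.trace := by
  refine Finset.sum_nonneg fun i _ => ?_
  have := hX.dotProduct_mulVec_nonneg (Pi.single i 1)
  simpa [mulVec_single, single_dotProduct] using this

lemma pairs_sum {m : ℕ} {M : Type*} [AddCommGroup M] (f : Fin m → Fin m → M)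
    (hsym : ∀ j k, f j k = f k j) (hdiag : ∀ j, f j j = 0) :
    (∑ g : {g : Fin m × Fin m // g.1 < g.2}, f g.1.1 g.1.2) +
      (∑ g : {g : Fin m × Fin m // g.1 < g.2}, f g.1.1 g.1.2) = ∑ j, ∑ k, f j k := by
  classical
  have h1 : (∑ g : {g : Fin m × Fin m // g.1 < g.2}, f g.1.1 g.1.2) =
      ∑ p ∈ Finset.univ.filter (fun p : Fin m × Fin m => p.1 < p.2), f p.1 p.2 :=
    (Finset.sum_subtype (p := fun g : Fin m × Fin m => g.1 < g.2) _ (by simp)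
      (fun p => f p.1 p.2)).symm
  have h2 : (∑ p ∈ Finset.univ.filter (fun p : Fin m × Fin m => ¬ p.1 < p.2), f p.1 p.2) =
      ∑ p ∈ Finset.univ.filter (fun p : Fin m × Fin m => p.2 < p.1), f p.1 p.2 := by
    refine (Finset.sum_subset ?_ ?_).symm
    · intro p hp
      simp only [Finset.mem_filter, Finset.mem_univ, true_and, not_lt] at hp ⊢
      exact hp.le
    · intro p hp hp2
      simp only [Finset.mem_filter, Finset.mem_univ, true_and, not_lt] at hp hp2
      have hpe : p.2 = p.1 := le_antisymm hp hp2
      rw [hpe, hdiag]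
  have h3 : (∑ p ∈ Finset.univ.filter (fun p : Fin m × Fin m => p.2 < p.1), f p.1 p.2) =
      ∑ p ∈ Finset.univ.filter (fun p : Fin m × Fin m => p.1 < p.2), f p.1 p.2 := by
    refine Finset.sum_nbij' Prod.swap Prod.swap ?_ ?_ ?_ ?_ ?_
    · intro p hp; simpa using (Finset.mem_filter.mp hp).2
    · intro p hp; simpa using (Finset.mem_filter.mp hp).2
    · intro p _; simp
    · intro p _; simp
    · intro p _; exact hsym p.1 p.2
  rw [h1]
  nth_rewrite 2 [← h3]
  rw [← h2, Finset.sum_filter_add_sum_filter_not]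
  exact Fintype.sum_prod_type _

lemma sum_pairs_eq {q r m : ℕ} (hm : (m:ℝ) ≠ 0) (B : Fin m → Matrix (Fin q) (Fin r) ℝ) :
    ∑ g : PairIdx m, ((B g.1.1 - B g.1.2)ᵀ * (B g.1.1 - B g.1.2)) =
      ((m:ℝ)^2) • SigmaB B := by
  set C : Fin m → Matrix (Fin q) (Fin r) ℝ := fun k => B k - (m:ℝ)⁻¹ • ∑ l, B l with hC
  set T : Matrix (Fin r) (Fin r) ℝ := ∑ k, (C k)ᵀ * C k with hT
  have hCsum : ∑ k, C k = 0 := by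
    simp only [hC, Finset.sum_sub_distrib, Finset.sum_const, Finset.card_univ,
      Fintype.card_fin, ← Nat.cast_smul_eq_nsmul ℝ, smul_smul]
    rw [mul_inv_cancel₀ hm, one_smul, sub_self]
  have hBC : ∀ j k : Fin m, B j - B k = C j - C k := fun j k =>
    (sub_sub_sub_cancel_right _ _ _).symm
  have hsym : ∀ j k : Fin m, (C j - C k)ᵀ * (C j - C k) = (C k - C j)ᵀ * (C k - C j) := by
    intro j k
    rw [← neg_sub (C k) (C j), transpose_neg, Matrix.neg_mul, Matrix.mul_neg, neg_neg]
  have hdiag : ∀ j : Fin m, (C j - C j)ᵀ * (C j - C j) = 0 := by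
    intro j; rw [sub_self, transpose_zero, Matrix.zero_mul]
  have hinner : ∀ j, ∑ k, ((C j - C k)ᵀ * (C j - C k)) = (m:ℝ) • ((C j)ᵀ * C j) + T := by
    intro j
    calc ∑ k, ((C j - C k)ᵀ * (C j - C k))
        = ∑ k, ((C j)ᵀ * C j - (C k)ᵀ * C j - ((C j)ᵀ * C k - (C k)ᵀ * C k)) := by
          refine Finset.sum_congr rfl fun k _ => ?_
          simp only [transpose_sub, Matrix.sub_mul, Matrix.mul_sub]
      _ = (m:ℝ) • ((C j)ᵀ * C j) + T := by
          rw [Finset.sum_sub_distrib, Finset.sum_sub_distrib, Finset.sum_sub_distrib,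
            Finset.sum_const, Finset.card_univ, Fintype.card_fin,
            ← Matrix.mul_sum, ← Matrix.sum_mul, ← transpose_sum, ← hT, hCsum,
            Matrix.mul_zero, transpose_zero, Matrix.zero_mul, ← Nat.cast_smul_eq_nsmul ℝ]
          abel
  have hdouble := pairs_sum (fun j k => (C j - C k)ᵀ * (C j - C k)) hsym hdiag
  have hrhs : ∑ j : Fin m, ((m:ℝ) • ((C j)ᵀ * C j) + T) = (m:ℝ) • T + (m:ℝ) • T := by
    rw [Finset.sum_add_distrib, ← Finset.smul_sum, ← hT, Finset.sum_const, Finset.card_univ,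
      Fintype.card_fin, ← Nat.cast_smul_eq_nsmul ℝ]
  have hP : (∑ g : PairIdx m, ((B g.1.1 - B g.1.2)ᵀ * (B g.1.1 - B g.1.2)))
      = ∑ g : PairIdx m, ((C g.1.1 - C g.1.2)ᵀ * (C g.1.1 - C g.1.2)) := by
    refine Finset.sum_congr rfl fun g _ => ?_
    rw [hBC]
  have h2 : (2:ℝ) • (∑ g : PairIdx m, ((B g.1.1 - B g.1.2)ᵀ * (B g.1.1 - B g.1.2)))
      = (2:ℝ) • ((m:ℝ) • T) := by
    rw [two_smul, two_smul, hP]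
    rw [show (∑ g : PairIdx m, ((C g.1.1 - C g.1.2)ᵀ * (C g.1.1 - C g.1.2))) +
        (∑ g : PairIdx m, ((C g.1.1 - C g.1.2)ᵀ * (C g.1.1 - C g.1.2))) =
        ∑ j, ∑ k, ((C j - C k)ᵀ * (C j - C k)) from hdouble]
    simp only [hinner]
    exact hrhs
  have h3 := smul_right_injective (Matrix (Fin r) (Fin r) ℝ) (two_ne_zero (α := ℝ)) h2
  have hSig : SigmaB B = (m:ℝ)⁻¹ • T := rfl
  rw [h3, hSig, smul_smul, pow_two]
  congr 1
  field_simp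

lemma stackedL_gram {q r p m : ℕ} (B : Fin m → Matrix (Fin q) (Fin r) ℝ)
    (A : Matrix (Fin r) (Fin p) ℝ) :
    (stackedL B A)ᵀ * stackedL B A =
      ∑ g : PairIdx m, (((B g.1.1 - B g.1.2) * A)ᵀ * ((B g.1.1 - B g.1.2) * A)) := by
  ext a b
  simp only [Matrix.mul_apply, Matrix.transpose_apply, Matrix.sum_apply, stackedL,
    Fintype.sum_prod_type]

/-- spectral bounds for the stacked contrast matrix `L`.  The eigenvalue
hypotheses `κ₀ ≤ λ_r(Σ_B)` and `λ₁(Σ_B) ≤ κ₁` are expressed as positive semidefiniteness of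
`Σ_B − κ₀ I` and `κ₁ I − Σ_B`; the conclusions `‖L‖_op² ≤ κ₁m²` and `σ_r(L)² ≥ κ₀m²`
(all nonzero eigenvalues of `LᵀL` lie in `[κ₀m², κ₁m²]`) are expressed as positive
semidefiniteness of `κ₁m² I − LᵀL` and `(LᵀL)² − κ₀m² LᵀL`, together with `rank(LᵀL) = r`. -/
theorem stmt8 {q r p m : ℕ} (hq : 1 ≤ q) (hr : 1 ≤ r) (hp : 1 ≤ p) (hrp : r ≤ p) (hm : 2 ≤ m)
    (B : Fin m → Matrix (Fin q) (Fin r) ℝ)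
    (κ₀ κ₁ : ℝ) (hκ₀ : 0 < κ₀) (hκ : κ₀ ≤ κ₁)
    (hlow : (SigmaB B - κ₀ • (1 : Matrix (Fin r) (Fin r) ℝ)).PosSemidef)
    (hhigh : (κ₁ • (1 : Matrix (Fin r) (Fin r) ℝ) - SigmaB B).PosSemidef)
    (A : Matrix (Fin r) (Fin p) ℝ) (hA : A * Aᵀ = 1) :
    ((stackedL B A)ᵀ * stackedL B A).rank = r ∧
    ((κ₁ * (m : ℝ) ^ 2) • (1 : Matrix (Fin p) (Fin p) ℝ) -
        (stackedL B A)ᵀ * stackedL B A).PosSemidef ∧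
    (((stackedL B A)ᵀ * stackedL B A) * ((stackedL B A)ᵀ * stackedL B A) -
        (κ₀ * (m : ℝ) ^ 2) • ((stackedL B A)ᵀ * stackedL B A)).PosSemidef ∧
    (∑ i, ∑ j, (stackedL B A i j) ^ 2) ≤ (r : ℝ) * κ₁ * (m : ℝ) ^ 2 := by
  classical
  have hm0 : (m:ℝ) ≠ 0 := Nat.cast_ne_zero.mpr (by omega)
  set M : Matrix (Fin r) (Fin r) ℝ := SigmaB B with hMdef
  -- the key Gram identity
  have key : (stackedL B A)ᵀ * stackedL B A = ((m:ℝ)^2) • (Aᵀ * M * A) := by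
    rw [stackedL_gram]
    calc ∑ g : PairIdx m, (((B g.1.1 - B g.1.2) * A)ᵀ * ((B g.1.1 - B g.1.2) * A))
        = ∑ g : PairIdx m,
            (Aᵀ * (((B g.1.1 - B g.1.2)ᵀ * (B g.1.1 - B g.1.2)) * A)) := by
          refine Finset.sum_congr rfl fun g _ => ?_
          rw [transpose_mul, Matrix.mul_assoc, Matrix.mul_assoc]
      _ = Aᵀ * ((∑ g : PairIdx m, ((B g.1.1 - B g.1.2)ᵀ * (B g.1.1 - B g.1.2))) * A) := by
          rw [← Matrix.mul_sum, ← Matrix.sum_mul]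
      _ = ((m:ℝ)^2) • (Aᵀ * M * A) := by
          rw [sum_pairs_eq hm0 B, Matrix.smul_mul, Matrix.mul_smul, Matrix.mul_assoc]
  -- positivity facts about M
  have hM1 : M.PosSemidef := by
    have h := hlow.add (psd_smul Matrix.PosSemidef.one hκ₀.le)
    simpa using h
  have hMpd : M.PosDef := by
    refine PosDef.of_dotProduct_mulVec_pos hM1.1 fun x hx => ?_
    have h1 := hlow.dotProduct_mulVec_nonneg x
    rw [sub_mulVec, dotProduct_sub, smul_mulVec, one_mulVec, dotProduct_smul,
      smul_eq_mul, sub_nonneg] at h1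
    have h2 : 0 < star x ⬝ᵥ x := by
      have hxx : star x ⬝ᵥ x = ∑ i, x i * x i := by simp [dotProduct]
      rw [hxx]
      obtain ⟨i, hi⟩ := Function.ne_iff.mp hx
      exact Finset.sum_pos' (fun i _ => mul_self_nonneg _)
        ⟨i, Finset.mem_univ i, mul_self_pos.mpr hi⟩
    exact lt_of_lt_of_le (by positivity) h1
  set S : Matrix (Fin r) (Fin r) ℝ := (open MatrixOrder in CFC.sqrt M) with hSdef
  have hS : S * S = M := by open MatrixOrder in exact CFC.sqrt_mul_sqrt_self M hM1.nonneg
  have hSh : Sᵀ = S := by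
    have h := (open MatrixOrder in (CFC.sqrt_nonneg M).posSemidef.isHermitian)
    rwa [← conjTranspose_eq_transpose_of_trivial]
  have hSdet : S.det ≠ 0 := by
    intro h
    have : S.det * S.det = M.det := by rw [← det_mul, hS]
    rw [h, mul_zero] at this
    exact absurd this.symm (ne_of_gt hMpd.det_pos)
  have hSA : (S*A)ᵀ*(S*A) = Aᵀ*M*A := by
    rw [transpose_mul, hSh, Matrix.mul_assoc, ← Matrix.mul_assoc S S A, hS,
      ← Matrix.mul_assoc]
  have hrankA : A.rank = r := by
    have h := Matrix.rank_self_mul_transpose A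
    rw [hA, Matrix.rank_one, Fintype.card_fin] at h
    exact h.symm
  refine ⟨?_, ?_, ?_, ?_⟩
  · -- rank
    have hPP : (((m:ℝ) • (S*A))ᵀ * ((m:ℝ) • (S*A))) = (stackedL B A)ᵀ * stackedL B A := by
      rw [key, transpose_smul, Matrix.smul_mul, Matrix.mul_smul, smul_smul, ← pow_two, hSA]
    rw [← hPP, Matrix.rank_transpose_mul_self]
    have hform : (m:ℝ) • (S*A) = ((m:ℝ) • S) * A := (Matrix.smul_mul _ _ _).symm
    rw [hform, Matrix.rank_mul_eq_right_of_isUnit_det, hrankA]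
    rw [det_smul]
    exact (isUnit_iff_ne_zero).mpr (mul_ne_zero (pow_ne_zero _ hm0) hSdet)
  · -- upper spectral bound
    have hAAt : (1 - Aᵀ*A : Matrix (Fin p) (Fin p) ℝ).PosSemidef := by
      have hPP : (Aᵀ*A)*(Aᵀ*A) = Aᵀ*A := by
        rw [Matrix.mul_assoc, ← Matrix.mul_assoc A Aᵀ A, hA, Matrix.one_mul]
      have htrans : (1 - Aᵀ*A : Matrix (Fin p) (Fin p) ℝ)ᵀ = 1 - Aᵀ*A := by
        rw [transpose_sub, transpose_one, transpose_mul, transpose_transpose]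
      have hidem : (1 - Aᵀ*A : Matrix (Fin p) (Fin p) ℝ)ᵀ * (1 - Aᵀ*A) = 1 - Aᵀ*A := by
        rw [htrans, Matrix.sub_mul, Matrix.mul_sub, Matrix.mul_sub, Matrix.one_mul,
          Matrix.one_mul, Matrix.mul_one, hPP]
        abel
      have h := posSemidef_conjTranspose_mul_self (1 - Aᵀ*A : Matrix (Fin p) (Fin p) ℝ)
      rwa [conjTranspose_eq_transpose_of_trivial, hidem] at h
    have hhigh' : (Aᵀ * (κ₁ • (1 : Matrix (Fin r) (Fin r) ℝ) - M) * A).PosSemidef := by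
      have h := hhigh.conjTranspose_mul_mul_same A
      rwa [conjTranspose_eq_transpose_of_trivial] at h
    have h2' : (κ₁ * (m : ℝ) ^ 2) • (1 : Matrix (Fin p) (Fin p) ℝ) -
        (stackedL B A)ᵀ * stackedL B A =
        ((m:ℝ)^2) • ((Aᵀ * (κ₁ • (1 : Matrix (Fin r) (Fin r) ℝ) - M) * A) +
          κ₁ • (1 - Aᵀ*A : Matrix (Fin p) (Fin p) ℝ)) := by
      rw [key, Matrix.mul_sub, Matrix.sub_mul, Matrix.mul_smul, Matrix.mul_one,
        Matrix.smul_mul]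
      module
    rw [h2']
    exact psd_smul (hhigh'.add (psd_smul hAAt (le_trans hκ₀.le hκ))) (by positivity)
  · -- lower spectral bound on nonzero eigenvalues
    have hXX : (Aᵀ*M*A)*(Aᵀ*M*A) = (S*A)ᵀ*M*(S*A) := by
      have h5 : A*(Aᵀ*M*A) = M*A := by
        rw [← Matrix.mul_assoc, ← Matrix.mul_assoc, hA, Matrix.one_mul]
      rw [Matrix.mul_assoc (Aᵀ*M) A (Aᵀ*M*A), h5, transpose_mul, hSh, ← hS]
      simp only [Matrix.mul_assoc]
    have hlow' : ((S*A)ᵀ * (M - κ₀ • (1 : Matrix (Fin r) (Fin r) ℝ)) * (S*A)).PosSemidef := by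
      have h := hlow.conjTranspose_mul_mul_same (S*A)
      rwa [conjTranspose_eq_transpose_of_trivial] at h
    have h3' : ((stackedL B A)ᵀ * stackedL B A) * ((stackedL B A)ᵀ * stackedL B A) -
        (κ₀ * (m : ℝ) ^ 2) • ((stackedL B A)ᵀ * stackedL B A) =
        ((m:ℝ)^2 * (m:ℝ)^2) • ((S*A)ᵀ * (M - κ₀ • (1 : Matrix (Fin r) (Fin r) ℝ)) * (S*A)) := by
      have e1 : (m:ℝ)^2 • (Aᵀ*M*A) * ((m:ℝ)^2 • (Aᵀ*M*A)) =
          ((m:ℝ)^2*(m:ℝ)^2) • ((S*A)ᵀ*M*(S*A)) := by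
        rw [Matrix.smul_mul, Matrix.mul_smul, smul_smul, hXX]
      have e2 : (S*A)ᵀ * (κ₀ • (1 : Matrix (Fin r) (Fin r) ℝ)) * (S*A) = κ₀ • (Aᵀ*M*A) := by
        rw [Matrix.mul_smul, Matrix.mul_one, Matrix.smul_mul, hSA]
      rw [key, e1, smul_smul, Matrix.mul_sub, Matrix.sub_mul, e2]
      module
    rw [h3']
    exact psd_smul hlow' (by positivity)
  · -- Frobenius bound
    have htr : (∑ i, ∑ j, (stackedL B A i j) ^ 2) = ((stackedL B A)ᵀ * stackedL B A).trace := by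
      rw [Matrix.trace]
      simp only [Matrix.diag, Matrix.mul_apply, Matrix.transpose_apply, sq]
      rw [Finset.sum_comm]
    have htrAMA : (Aᵀ * M * A).trace = M.trace := by
      rw [trace_mul_comm, ← Matrix.mul_assoc, hA, Matrix.one_mul]
    have hMtr : M.trace ≤ κ₁ * r := by
      have h := psd_trace_nonneg hhigh
      rw [trace_sub, trace_smul, trace_one, Fintype.card_fin, smul_eq_mul] at h
      linarith
    rw [htr, key, trace_smul, smul_eq_mul, htrAMA]
    have hm2 : (0:ℝ) ≤ (m:ℝ)^2 := sq_nonneg _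
    nlinarith
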